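/- Let G be a finite connected simple graph on a vertex set V with at least two vertices and a distinguished sink vertex s ∈ V, and let z : V → ℕ be a sandpile configuration. If L₁ and L₂ are two complete legal toppling sequences (with sink s) from z, then L₁ and L₂ are equal as multisets of vertices: every vertex is toppled the same number of times in any complete legal toppling sequence from z. -/

import Mathlib

/-!
Least action principle: if `L₁` is a complete legal toppling sequence from `z` and `L₂` is
any legal one, then `L₂ ≤ L₁` as multisets. Induct on `L₂`. Its first vertex `j` is unstable
in `z`; toppling other vertices only adds particles to `j`, so `j` stays unstable until `L₁`
topples it, and `L₁` must topple it since it ends in a stable configuration. Topplings of two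
unstable vertices commute, so the first occurrence of `j` in `L₁` can be moved to the front,
and the induction proceeds from `topple G z j`. Applying this in both directions gives the
theorem.
-/

variable {V : Type*}

def topple (G : SimpleGraph V) [G.LocallyFinite] [DecidableEq V] [DecidableRel G.Adj]
    (z : V → ℕ) (i : V) : V → ℕ :=
  fun j => if j = i then z i - G.degree i else if G.Adj i j then z j + 1 else z j

def LegalSeq (G : SimpleGraph V) [G.LocallyFinite] [DecidableEq V] [DecidableRel G.Adj]
    (s : V) : (V → ℕ) → List V → Prop
  | _, [] => True
  | z, i :: L => i ≠ s ∧ G.degree i ≤ z i ∧ LegalSeq G s (topple G z i) L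

section Toppling

variable (G : SimpleGraph V) [G.LocallyFinite] [DecidableEq V] [DecidableRel G.Adj]

def IsStable (s : V) (z : V → ℕ) : Prop :=
  ∀ v, v ≠ s → z v < G.degree v

lemma le_topple_of_ne (z : V → ℕ) {i j : V} (h : j ≠ i) : z j ≤ topple G z i j := by
  simp only [topple, if_neg h]
  split <;> omega

lemma le_foldl_topple_of_notMem {j : V} :
    ∀ {L : List V} (z : V → ℕ), j ∉ L → z j ≤ L.foldl (topple G) z j
  | [], _, _ => le_rfl
  | i :: L, z, hj => by
    rw [List.mem_cons, not_or] at hj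
    exact (le_topple_of_ne G z hj.1).trans (le_foldl_topple_of_notMem (topple G z i) hj.2)

lemma topple_topple_comm (z : V → ℕ) {i j : V} (hij : i ≠ j)
    (hi : G.degree i ≤ z i) (hj : G.degree j ≤ z j) :
    topple G (topple G z i) j = topple G (topple G z j) i := by
  funext k
  rcases eq_or_ne k i with rfl | hki
  · by_cases h : G.Adj j k <;> simp [topple, hij, h, Nat.sub_add_comm hi]
  · rcases eq_or_ne k j with rfl | hkj
    · by_cases h : G.Adj i k <;> simp [topple, hij.symm, h, Nat.sub_add_comm hj]
    · by_cases h1 : G.Adj i k <;> by_cases h2 : G.Adj j k <;> simp [topple, hki, hkj, h1, h2]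

variable {G} {s : V}

lemma LegalSeq.move_to_front {j : V} (hjs : j ≠ s) :
    ∀ (A : List V) (z : V → ℕ) (B : List V), j ∉ A → G.degree j ≤ z j →
      LegalSeq G s z (A ++ j :: B) →
      LegalSeq G s (topple G z j) (A ++ B) ∧
        (A ++ B).foldl (topple G) (topple G z j) = (A ++ j :: B).foldl (topple G) z
  | [], _, _, _, _, hL => ⟨hL.2.2, rfl⟩
  | i :: A, z, B, hjA, hj, ⟨his, hi, hL⟩ => by
    rw [List.mem_cons, not_or] at hjA
    have hcomm := topple_topple_comm G z (Ne.symm hjA.1) hi hj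
    obtain ⟨hlegal, hfold⟩ :=
      move_to_front hjs A (topple G z i) B hjA.2 (hj.trans (le_topple_of_ne G z hjA.1)) hL
    refine ⟨⟨his, hi.trans (le_topple_of_ne G z (Ne.symm hjA.1)), hcomm ▸ hlegal⟩, ?_⟩
    simpa only [List.cons_append, List.foldl_cons, hcomm] using hfold

lemma LegalSeq.coe_le_of_isStable :
    ∀ {L₂ : List V} {z : V → ℕ} {L₁ : List V}, LegalSeq G s z L₁ →
      IsStable G s (L₁.foldl (topple G) z) → LegalSeq G s z L₂ →
      (L₂ : Multiset V) ≤ L₁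
  | [], _, _, _, _, _ => Multiset.zero_le _
  | j :: L₂, z, L₁, h₁, hstable, ⟨hjs, hj, h₂⟩ => by
    have hjL₁ : j ∈ L₁ := by
      by_contra hjL₁
      exact (hstable j hjs).not_ge (hj.trans (le_foldl_topple_of_notMem G z hjL₁))
    obtain ⟨A, B, hjA, rfl, herase⟩ := List.exists_erase_eq hjL₁
    obtain ⟨hlegal, hfold⟩ := h₁.move_to_front hjs A z B hjA hj
    rw [← Multiset.cons_coe, ← Multiset.cons_erase (Multiset.mem_coe.mpr hjL₁),
      Multiset.coe_erase, herase]
    exact Multiset.cons_le_cons j (coe_le_of_isStable hlegal (hfold ▸ hstable) h₂)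

end Toppling

theorem abelian_multiset_general [Fintype V] [DecidableEq V]
    (G : SimpleGraph V) [DecidableRel G.Adj]
    (s : V)
    (z : V → ℕ) (L₁ L₂ : List V)
    (h₁ : LegalSeq G s z L₁) (h₂ : LegalSeq G s z L₂)
    (hc₁ : ∀ v, v ≠ s → L₁.foldl (topple G) z v < G.degree v)
    (hc₂ : ∀ v, v ≠ s → L₂.foldl (topple G) z v < G.degree v) :
    (L₁ : Multiset V) = (L₂ : Multiset V) :=
  le_antisymm (h₂.coe_le_of_isStable hc₂ h₁) (h₁.coe_le_of_isStable hc₁ h₂)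

/-- Abelian property (strong form): on a finite connected simple graph with at
least two vertices and a sink `s`, any two complete legal toppling sequences
from the same initial configuration are equal as multisets of vertices: every
vertex is toppled the same number of times. -/
theorem abelian_multiset [Fintype V] [DecidableEq V]
    (G : SimpleGraph V) [DecidableRel G.Adj]
    (hconn : G.Connected) (hcard : 1 < Fintype.card V) (s : V)
    (z : V → ℕ) (L₁ L₂ : List V)
    (h₁ : LegalSeq G s z L₁) (h₂ : LegalSeq G s z L₂)
    (hc₁ : ∀ v, v ≠ s → L₁.foldl (topple G) z v < G.degree v)
    (hc₂ : ∀ v, v ≠ s → L₂.foldl (topple G) z v < G.degree v) :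
    (L₁ : Multiset V) = (L₂ : Multiset V) :=
  abelian_multiset_general G s z L₁ L₂ h₁ h₂ hc₁ hc₂
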